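/- arXiv:1903.00687 — 3 statements merged into one kernel-verified Lean document; each statement's English description precedes it below -/
import Mathlib

section
/- Let H be a reproducing kernel Hilbert space of functions on a set Ω with kernel r : Ω × Ω → ℝ, let x₁, …, x_M ∈ Ω, y ∈ ℝ^M, λ > 0, and let E_m : ℝ × ℝ → ℝ be convex and continuous in the second argument for each m. Then the problem of minimizing ∑_{m=1}^M E_m(y_m, f(x_m)) + λ‖f‖_H² over f ∈ H admits a minimizer of the form f₀ = ∑_{m=1}^M a_m r(·, x_m) for some a ∈ ℝ^M, and every minimizer has this form. -/
open RealInnerProductSpace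

/-- A convex function on `ℝ` is bounded below by `B - C * |t|` for some constants. -/
lemma convexOn_affine_lb {g : ℝ → ℝ} (hg : ConvexOn ℝ Set.univ g) :
    ∃ C B : ℝ, 0 ≤ C ∧ ∀ t, B - C * |t| ≤ g t := by
  refine ⟨max |g 0 - g (-1)| |g 1 - g 0|, g 0, le_max_iff.2 (Or.inl (abs_nonneg _)), fun t => ?_⟩
  have hC1 : g 0 - g (-1) ≥ -(max |g 0 - g (-1)| |g 1 - g 0|) := by
    have := le_max_left |g 0 - g (-1)| |g 1 - g 0|
    cases abs_cases (g 0 - g (-1)) with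
    | inl h => linarith [h.1]
    | inr h => linarith [h.1]
  have hC2 : g 1 - g 0 ≤ max |g 0 - g (-1)| |g 1 - g 0| := by
    have := le_max_right |g 0 - g (-1)| |g 1 - g 0|
    exact le_trans (le_abs_self _) this
  rcases lt_trichotomy t 0 with ht | rfl | ht
  · -- t < 0 : use slope between t, 0, 1
    have h := hg.slope_mono_adjacent (Set.mem_univ t) (Set.mem_univ 1) ht one_pos
    -- (g 0 - g t) / (0 - t) ≤ (g 1 - g 0) / (1 - 0)
    rw [abs_of_neg ht]
    have h0t : (0:ℝ) < 0 - t := by linarith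
    rw [div_le_div_iff₀ h0t (by norm_num)] at h
    nlinarith [hC2, h]
  · simp
  · -- t > 0 : use slope between -1, 0, t
    have h := hg.slope_mono_adjacent (Set.mem_univ (-1)) (Set.mem_univ t) (by norm_num) ht
    rw [abs_of_pos ht]
    have h0t : (0:ℝ) < t - 0 := by linarith
    rw [div_le_div_iff₀ (by norm_num : (0:ℝ) < 0 - -1) h0t] at h
    nlinarith [hC1, h]

/-- Schölkopf's representer theorem for RKHS: some minimizer is a finite kernel expansion
over the data points, and every minimizer has this form. Here `k x` is the kernel section
`r(·, x)` in `H` and `T f` is the function realized by `f` via the reproducing property. -/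
theorem rkhs_representer {H Ω : Type*} [NormedAddCommGroup H] [InnerProductSpace ℝ H]
    [CompleteSpace H] {M : ℕ} (r : Ω → Ω → ℝ) (k : Ω → H) (T : H → Ω → ℝ)
    (hT : ∀ f x, T f x = ⟪f, k x⟫) (hk : ∀ x x', T (k x) x' = r x' x)
    (x : Fin M → Ω) (y : Fin M → ℝ) (lam : ℝ) (hlam : 0 < lam)
    (E : Fin M → ℝ → ℝ → ℝ)
    (hconv : ∀ m c, ConvexOn ℝ Set.univ (E m c))
    (hcont : ∀ m c, Continuous (E m c)) :
    let F : H → ℝ := fun f => ∑ m, E m (y m) (T f (x m)) + lam * ‖f‖ ^ 2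
    (∃ a : Fin M → ℝ, ∀ f, F (∑ m, a m • k (x m)) ≤ F f) ∧
      ∀ f₀, (∀ f, F f₀ ≤ F f) → ∃ a : Fin M → ℝ, f₀ = ∑ m, a m • k (x m) := by
  intro F
  set V : Submodule ℝ H := Submodule.span ℝ (Set.range fun m => k (x m)) with hV
  haveI : FiniteDimensional ℝ V := FiniteDimensional.span_of_finite ℝ (Set.finite_range _)
  have hkV : ∀ m, k (x m) ∈ V := fun m => Submodule.subset_span ⟨m, rfl⟩
  -- projection facts
  have hinner : ∀ (f : H) (m : Fin M),
      ⟪f, k (x m)⟫ = ⟪(Submodule.orthogonalProjectionOnto V f : H), k (x m)⟫ := by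
    intro f m
    have h := Submodule.sub_starProjection_mem_orthogonal (K := V) f
    have h0 : ⟪f - (Submodule.orthogonalProjectionOnto V f : H), k (x m)⟫ = 0 := by
      have := (Submodule.mem_orthogonal V _).1 h (k (x m)) (hkV m)
      rwa [real_inner_comm]
    rw [inner_sub_left] at h0
    linarith
  have hnormsq : ∀ f : H, ‖(Submodule.orthogonalProjectionOnto V f : H)‖ ^ 2 ≤ ‖f‖ ^ 2 := by
    intro f
    have := Submodule.norm_sq_eq_add_norm_sq_projection f V
    have h2 : (0:ℝ) ≤ ‖(Submodule.orthogonalProjectionOnto Vᗮ f : H)‖ ^ 2 := by positivity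
    rw [Submodule.norm_coe] at *
    nlinarith
  have hFproj : ∀ f : H, F (Submodule.orthogonalProjectionOnto V f : H) ≤ F f := by
    intro f
    have hsum : ∀ m, T (Submodule.orthogonalProjectionOnto V f : H) (x m) = T f (x m) := by
      intro m; rw [hT, hT]; exact (hinner f m).symm
    simp only [F]
    have : ∑ m, E m (y m) (T ((Submodule.orthogonalProjectionOnto V f : H)) (x m))
        = ∑ m, E m (y m) (T f (x m)) := by
      apply Finset.sum_congr rfl; intro m _; rw [hsum]
    rw [this]
    have := hnormsq f
    nlinarith
  -- every minimizer lies in V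
  have hminV : ∀ f₀ : H, (∀ f, F f₀ ≤ F f) → f₀ ∈ V := by
    intro f₀ hmin
    by_contra hnot
    have hne : f₀ - (Submodule.orthogonalProjectionOnto V f₀ : H) ≠ 0 := by
      intro h
      apply hnot
      have : f₀ = (Submodule.orthogonalProjectionOnto V f₀ : H) := by
        have := sub_eq_zero.mp h; exact this
      rw [this]; exact (Submodule.orthogonalProjectionOnto V f₀).2
    have hlt : ‖(Submodule.orthogonalProjectionOnto V f₀ : H)‖ ^ 2 < ‖f₀‖ ^ 2 := by
      have h := Submodule.norm_sq_eq_add_norm_sq_projection f₀ V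
      have h2 : (0:ℝ) < ‖(Submodule.orthogonalProjectionOnto Vᗮ f₀ : H)‖ ^ 2 := by
        have : (Submodule.orthogonalProjectionOnto Vᗮ f₀ : H) ≠ 0 := by
          change Vᗮ.starProjection f₀ ≠ 0
          rw [Submodule.starProjection_orthogonal_val]
          exact hne
        have := norm_pos_iff.2 this
        positivity
      rw [Submodule.norm_coe]
      rw [Submodule.norm_coe] at h2
      nlinarith
    have hFlt : F (Submodule.orthogonalProjectionOnto V f₀ : H) < F f₀ := by
      simp only [F]
      have hsum : ∑ m, E m (y m) (T ((Submodule.orthogonalProjectionOnto V f₀ : H)) (x m))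
          = ∑ m, E m (y m) (T f₀ (x m)) := by
        apply Finset.sum_congr rfl; intro m _; rw [hT, hT]
        exact congrArg _ (hinner f₀ m).symm
      rw [hsum]
      nlinarith
    exact absurd (hmin _) (not_le.2 hFlt)
  constructor
  · -- existence of a minimizer in V
    -- minimize F restricted to V
    have hcontF : Continuous fun v : V => F (v : H) := by
      simp only [F]
      apply Continuous.add
      · apply continuous_finset_sum
        intro m _
        have : Continuous fun v : V => T (v : H) (x m) := by
          simp only [hT]
          exact Continuous.inner continuous_subtype_val continuous_const
        exact (hcont m (y m)).comp this
      · exact (continuous_const.mul ((continuous_subtype_val.norm).pow 2))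
    -- coercivity
    obtain ⟨C, B, hCB⟩ : ∃ (C B : Fin M → ℝ), ∀ m, 0 ≤ C m ∧ ∀ t, B m - C m * |t| ≤ E m (y m) t := by
      have h := fun m => convexOn_affine_lb (hconv m (y m))
      choose C B h1 h2 using h
      exact ⟨C, B, fun m => ⟨h1 m, h2 m⟩⟩
    set D : ℝ := ∑ m, C m * ‖k (x m)‖ with hD
    have hD0 : 0 ≤ D := Finset.sum_nonneg fun m _ => mul_nonneg (hCB m).1 (norm_nonneg _)
    have hlb : ∀ v : V, (∑ m, B m) - D * ‖(v : H)‖ + lam * ‖(v : H)‖ ^ 2 ≤ F (v : H) := by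
      intro v
      simp only [F]
      have h1 : ∀ m ∈ Finset.univ, B m - C m * ‖k (x m)‖ * ‖(v : H)‖ ≤ E m (y m) (T (v:H) (x m)) := by
        intro m _
        have h2 := (hCB m).2 (T (v:H) (x m))
        have h3 : |T (v:H) (x m)| ≤ ‖(v : H)‖ * ‖k (x m)‖ := by
          rw [hT]
          exact abs_real_inner_le_norm _ _
        nlinarith [(hCB m).1, h2, h3]
      have h4 := Finset.sum_le_sum h1
      have h5 : ∑ m, (B m - C m * ‖k (x m)‖ * ‖(v : H)‖)
          = (∑ m, B m) - D * ‖(v : H)‖ := by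
        rw [Finset.sum_sub_distrib, hD, Finset.sum_mul]
      rw [h5] at h4
      linarith
    have hco : Filter.Tendsto (fun v : V => F (v : H)) (Filter.cocompact V) Filter.atTop := by
      have hnorm : Filter.Tendsto (fun v : V => ‖v‖) (Filter.cocompact V) Filter.atTop :=
        tendsto_norm_cocompact_atTop
      have hphi : Filter.Tendsto (fun s : ℝ => (∑ m, B m) - D * s + lam * s ^ 2)
          Filter.atTop Filter.atTop := by
        have h1 : Filter.Tendsto (fun s : ℝ => s * (lam * s - D) + (∑ m, B m))
            Filter.atTop Filter.atTop := by
          apply Filter.Tendsto.atTop_add _ tendsto_const_nhds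
          apply Filter.Tendsto.atTop_mul_atTop₀ Filter.tendsto_id
          apply Filter.tendsto_atTop_add_const_right
          exact Filter.Tendsto.const_mul_atTop hlam Filter.tendsto_id
        refine h1.congr fun s => by ring
      have := hphi.comp hnorm
      apply Filter.tendsto_atTop_mono _ this
      intro v
      have h := hlb v
      rw [Submodule.norm_coe] at h
      exact h
    rcases M with _ | M
    · -- M = 0, V might be trivial but V is nonempty anyway
      refine ⟨fun m => 0, fun f => ?_⟩
      simp only [F, Finset.univ_eq_empty, Finset.sum_empty, zero_add]
      have : (0:ℝ) ≤ lam * ‖f‖ ^ 2 := by positivity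
      simpa using this
    · haveI : Nonempty V := ⟨0⟩
      obtain ⟨v₀, hv₀⟩ := hcontF.exists_forall_le hco
      obtain ⟨a, ha⟩ := (Submodule.mem_span_range_iff_exists_fun ℝ).1 v₀.2
      refine ⟨a, fun f => ?_⟩
      rw [ha]
      exact le_trans (hv₀ (Submodule.orthogonalProjectionOnto V f)) (hFproj f)
  · intro f₀ hmin
    obtain ⟨a, ha⟩ := (Submodule.mem_span_range_iff_exists_fun ℝ).1 (hminV f₀ hmin)
    exact ⟨a, ha.symm⟩
end

section
/- Let X' be the dual of a real Banach space X, ν : X' → ℝ^M a weak*-continuous linear map, E : ℝ^M → ℝ strictly convex, and ψ : [0,∞) → [0,∞) strictly increasing and convex. If f₁ and f₂ both minimize f ↦ E(ν(f)) + ψ(‖f‖_{X'}) over X', then ν(f₁) = ν(f₂) and ‖f₁‖_{X'} = ‖f₂‖_{X'}. -/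
/-- With a strictly convex data term, all minimizers share the same measurement vector and
the same regularization cost. -/
theorem minimizers_share_measurements {X : Type*} [NormedAddCommGroup X] [NormedSpace ℝ X]
    [CompleteSpace X] {M : ℕ}
    (ν : (X →L[ℝ] ℝ) →ₗ[ℝ] (Fin M → ℝ))
    (hν : Continuous fun f : WeakDual ℝ X => ν (StrongDual.toWeakDual.symm f))
    (E : (Fin M → ℝ) → ℝ) (hE : StrictConvexOn ℝ Set.univ E)
    (ψ : ℝ → ℝ) (hψ_mono : StrictMonoOn ψ (Set.Ici 0))
    (hψ_conv : ConvexOn ℝ (Set.Ici 0) ψ)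
    (f₁ f₂ : X →L[ℝ] ℝ)
    (h₁ : ∀ g, E (ν f₁) + ψ ‖f₁‖ ≤ E (ν g) + ψ ‖g‖)
    (h₂ : ∀ g, E (ν f₂) + ψ ‖f₂‖ ≤ E (ν g) + ψ ‖g‖) :
    ν f₁ = ν f₂ ∧ ‖f₁‖ = ‖f₂‖ := by
  have hval : E (ν f₁) + ψ ‖f₁‖ = E (ν f₂) + ψ ‖f₂‖ := le_antisymm (h₁ f₂) (h₂ f₁)
  have hmono := hψ_mono.monotoneOn
  have key : ν f₁ = ν f₂ := by
    by_contra hne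
    set g := (1/2 : ℝ) • f₁ + (1/2 : ℝ) • f₂ with hg
    have hνg : ν g = (1/2 : ℝ) • ν f₁ + (1/2 : ℝ) • ν f₂ := by
      simp [hg, map_add, map_smul]
    have hEg : E (ν g) < (1/2) * E (ν f₁) + (1/2) * E (ν f₂) := by
      have := hE.2 (Set.mem_univ (ν f₁)) (Set.mem_univ (ν f₂)) hne
        (by norm_num : (0:ℝ) < 1/2) (by norm_num : (0:ℝ) < 1/2) (by norm_num)
      rw [hνg]
      simpa using this
    have hnorm : ‖g‖ ≤ (1/2)*‖f₁‖ + (1/2)*‖f₂‖ := by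
      calc ‖g‖ ≤ ‖(1/2:ℝ)•f₁‖ + ‖(1/2:ℝ)•f₂‖ := norm_add_le _ _
      _ = (1/2)*‖f₁‖ + (1/2)*‖f₂‖ := by
          rw [norm_smul (1/2:ℝ) f₁, norm_smul (1/2:ℝ) f₂]
          simp [abs_of_nonneg]
    have hψg : ψ ‖g‖ ≤ (1/2)*ψ ‖f₁‖ + (1/2)*ψ ‖f₂‖ := by
      have hmem : (1/2)*‖f₁‖ + (1/2)*‖f₂‖ ∈ Set.Ici (0:ℝ) := by
        have := norm_nonneg f₁; have := norm_nonneg f₂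
        simp only [Set.mem_Ici]; linarith
      have h1 : ψ ‖g‖ ≤ ψ ((1/2)*‖f₁‖ + (1/2)*‖f₂‖) :=
        hmono (Set.mem_Ici.mpr (norm_nonneg g)) hmem hnorm
      have h2 := hψ_conv.2 (Set.mem_Ici.mpr (norm_nonneg f₁))
        (Set.mem_Ici.mpr (norm_nonneg f₂))
        (by norm_num : (0:ℝ) ≤ 1/2) (by norm_num : (0:ℝ) ≤ 1/2) (by norm_num)
      simp only [smul_eq_mul] at h2
      linarith
    have := h₁ g
    linarith
  refine ⟨key, ?_⟩
  have hψeq : ψ ‖f₁‖ = ψ ‖f₂‖ := by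
    rw [key] at hval; linarith
  exact hψ_mono.injOn (Set.mem_Ici.mpr (norm_nonneg f₁))
    (Set.mem_Ici.mpr (norm_nonneg f₂)) hψeq
end

section
/- Let H ∈ ℝ^{M×N}, y ∈ ℝ^M, λ > 0, and 1 < p < ∞ with conjugate exponent q. The functional x ↦ ‖y − Hx‖₂² + λ‖x‖_{ℓ^p}^p on ℝ^N has a unique minimizer s, and if s ≠ 0, there exists a ∈ ℝ^M such that for every n, s_n = |(Hᵀa)_n|^{q-1} · sign((Hᵀa)_n) / ‖Hᵀa‖_{ℓ^q}^{q-2}. -/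
open Filter Set

private lemma abs_rpow_strict {p : ℝ} (hp : 1 < p) :
    StrictConvexOn ℝ Set.univ fun t : ℝ => |t| ^ p := by
  have hp0 : (0:ℝ) < p := by linarith
  refine ⟨convex_univ, fun x _ y _ hxy a b ha hb hab => ?_⟩
  simp only [smul_eq_mul]
  rcases eq_or_ne |x| |y| with habs | habs
  · have hx0 : x = -y := (abs_eq_abs.1 habs).resolve_left hxy
    have hy0 : y ≠ 0 := by rintro rfl; simp [hx0] at hxy
    have h1 : a * x + b * y = (b - a) * y := by rw [hx0]; ring
    have h3 : |a * x + b * y| < |y| := by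
      rw [h1, abs_mul]
      calc |b - a| * |y| < 1 * |y| :=
            mul_lt_mul_of_pos_right (abs_lt.2 ⟨by linarith, by linarith⟩) (abs_pos.2 hy0)
        _ = |y| := one_mul _
    calc |a * x + b * y| ^ p < |y| ^ p := Real.rpow_lt_rpow (abs_nonneg _) h3 hp0
      _ = a * |x| ^ p + b * |y| ^ p := by rw [habs, ← add_mul, hab, one_mul]
  · have h2 : |a * x + b * y| ≤ a * |x| + b * |y| := by
      calc |a * x + b * y| ≤ |a * x| + |b * y| := abs_add_le _ _
        _ = a * |x| + b * |y| := by rw [abs_mul, abs_mul, abs_of_pos ha, abs_of_pos hb]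
    have h3 := Real.rpow_le_rpow (abs_nonneg _) h2 hp0.le
    have h4 := (strictConvexOn_rpow hp).2 (Set.mem_Ici.2 (abs_nonneg x))
      (Set.mem_Ici.2 (abs_nonneg y)) habs ha hb hab
    simp only [smul_eq_mul] at h4
    exact h3.trans_lt h4

private lemma lp_hasDerivAt_abs_rpow {p : ℝ} (hp : 1 < p) (x : ℝ) :
    HasDerivAt (fun t : ℝ => |t| ^ p) (p * |x| ^ (p - 1) * Real.sign x) x := by
  convert hasDerivAt_abs_rpow x hp using 1
  rcases lt_trichotomy x 0 with hx | rfl | hx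
  · have habs : |x| ≠ 0 := by simp [abs_pos.2 (ne_of_lt hx)] <;> linarith
    rw [Real.sign_of_neg hx, show p - 1 = p - 2 + 1 by ring, Real.rpow_add_one habs,
      abs_of_neg hx]
    ring
  · simp [Real.sign_zero]
  · have habs : |x| ≠ 0 := by simp [abs_pos.2 (ne_of_gt hx)] <;> linarith
    rw [Real.sign_of_pos hx, show p - 1 = p - 2 + 1 by ring, Real.rpow_add_one habs,
      abs_of_pos hx]
    ring

private lemma dual_invert {p q : ℝ} (hq : 1 < q) (hpq1 : (p - 1) * (q - 1) = 1) (u : ℝ) :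
    |(|u| ^ (p - 1) * Real.sign u)| ^ (q - 1) * Real.sign (|u| ^ (p - 1) * Real.sign u) = u := by
  have hq1 : q - 1 ≠ 0 := by intro h; linarith [sub_eq_zero.1 h]
  rcases lt_trichotomy u 0 with hu | rfl | hu
  · rw [abs_of_neg hu, Real.sign_of_neg hu, mul_neg_one]
    have h1 : (0:ℝ) < (-u) ^ (p - 1) := Real.rpow_pos_of_pos (by linarith) _
    rw [abs_neg, abs_of_pos h1, Real.sign_of_neg (by linarith : -((-u) ^ (p - 1)) < 0),
      ← Real.rpow_mul (by linarith : (0:ℝ) ≤ -u), hpq1, Real.rpow_one, mul_neg_one, neg_neg]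
  · simp [Real.sign_zero, Real.zero_rpow hq1]
  · rw [abs_of_pos hu, Real.sign_of_pos hu, mul_one]
    have h1 : (0:ℝ) < u ^ (p - 1) := Real.rpow_pos_of_pos hu _
    rw [abs_of_pos h1, Real.sign_of_pos h1, mul_one,
      ← Real.rpow_mul hu.le, hpq1, Real.rpow_one]

/-- Representer theorem for ℓᵖ-regularized least squares (1 < p < ∞): the unique minimizer
is the ℓ^q-to-ℓ^p duality map applied to an element Hᵀa of the row space of H. -/
theorem lp_representer {M N : ℕ} (H : Matrix (Fin M) (Fin N) ℝ) (y : Fin M → ℝ)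
    (lam : ℝ) (hlam : 0 < lam) (p q : ℝ) (hp : 1 < p) (hq : 1 < q)
    (hpq : 1 / p + 1 / q = 1) :
    let F : (Fin N → ℝ) → ℝ :=
      fun x => ∑ m, (y m - H.mulVec x m) ^ 2 + lam * ∑ n, |x n| ^ p
    ∃ s : Fin N → ℝ, (∀ x, F s ≤ F x) ∧ (∀ x, (∀ x', F x ≤ F x') → x = s) ∧
      (s ≠ 0 → ∃ a : Fin M → ℝ, ∀ n,
        s n = |H.transpose.mulVec a n| ^ (q - 1) * Real.sign (H.transpose.mulVec a n) /
          ((∑ k, |H.transpose.mulVec a k| ^ q) ^ (1 / q)) ^ (q - 2)) := by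
  intro F
  have hF : ∀ x, F x = ∑ m, (y m - H.mulVec x m) ^ 2 + lam * ∑ n, |x n| ^ p := fun _ => rfl
  have hp0 : (0:ℝ) < p := by linarith
  have hq0 : (0:ℝ) < q := by linarith
  have hpq1 : (p - 1) * (q - 1) = 1 := by
    have hpne : p ≠ 0 := by linarith
    have hqne : q ≠ 0 := by linarith
    field_simp at hpq
    nlinarith [hpq]
  have hq1 : q - 1 ≠ 0 := by intro h; linarith [sub_eq_zero.1 h]
  -- continuity
  have cont_abs : Continuous fun t : ℝ => |t| ^ p :=
    (Real.continuous_rpow_const hp0.le).comp continuous_abs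
  have hmv : ∀ (x : Fin N → ℝ) (m : Fin M), H.mulVec x m = ∑ k, H m k * x k :=
    fun x m => rfl
  have contH : ∀ m, Continuous fun x : Fin N → ℝ => H.mulVec x m := by
    intro m
    simp only [hmv]
    exact continuous_finset_sum _ fun k _ => continuous_const.mul (continuous_apply k)
  have contF : Continuous F := by
    apply Continuous.add
    · exact continuous_finset_sum _ fun m _ => (continuous_const.sub (contH m)).pow 2
    · exact continuous_const.mul
        (continuous_finset_sum _ fun n _ => cont_abs.comp (continuous_apply n))
  -- coercivity
  rcases Nat.eq_zero_or_pos N with hN | hN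
  · subst hN
    refine ⟨0, fun x => le_of_eq (congrArg F (Subsingleton.elim 0 x)),
      fun x _ => Subsingleton.elim x 0, fun hs => absurd (Subsingleton.elim _ _) hs⟩
  haveI : Nonempty (Fin N) := ⟨⟨0, hN⟩⟩
  have hbound : ∀ x : Fin N → ℝ, lam * ‖x‖ ^ p ≤ F x := by
    intro x
    obtain ⟨n0, -, hn0⟩ := Finset.exists_max_image Finset.univ (fun n => |x n|)
      Finset.univ_nonempty
    have hxle : ‖x‖ ≤ |x n0| := by
      rw [pi_norm_le_iff_of_nonneg (abs_nonneg _)]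
      intro i
      exact hn0 i (Finset.mem_univ i)
    have h1 : ‖x‖ ^ p ≤ |x n0| ^ p := Real.rpow_le_rpow (norm_nonneg _) hxle hp0.le
    have h2 : |x n0| ^ p ≤ ∑ n, |x n| ^ p :=
      Finset.single_le_sum (fun n _ => Real.rpow_nonneg (abs_nonneg _) _)
        (Finset.mem_univ n0)
    have h3 : (0:ℝ) ≤ ∑ m, (y m - H.mulVec x m) ^ 2 :=
      Finset.sum_nonneg fun m _ => sq_nonneg _
    rw [hF]
    nlinarith [mul_le_mul_of_nonneg_left (h1.trans h2) hlam.le]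
  have hcoer : Tendsto F (cocompact _) atTop := by
    have h1 : Tendsto (fun x : Fin N → ℝ => lam * ‖x‖ ^ p) (cocompact _) atTop :=
      ((tendsto_rpow_atTop hp0).const_mul_atTop hlam).comp tendsto_norm_cocompact_atTop
    exact tendsto_atTop_mono hbound h1
  obtain ⟨s, hs⟩ := contF.exists_forall_le hcoer
  -- strict convexity
  have hstrict : StrictConvexOn ℝ univ F := by
    refine ⟨convex_univ, fun x₁ _ x₂ _ hne a b ha hb hab => ?_⟩
    have hQ : ∑ m, (y m - H.mulVec (a • x₁ + b • x₂) m) ^ 2 ≤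
        a * ∑ m, (y m - H.mulVec x₁ m) ^ 2 + b * ∑ m, (y m - H.mulVec x₂ m) ^ 2 := by
      rw [Finset.mul_sum, Finset.mul_sum, ← Finset.sum_add_distrib]
      apply Finset.sum_le_sum
      intro m _
      have hmv2 : H.mulVec (a • x₁ + b • x₂) m = a * H.mulVec x₁ m + b * H.mulVec x₂ m := by
        simp [Matrix.mulVec_add, Matrix.mulVec_smul]
      rw [hmv2]
      have hb' : b = 1 - a := by linarith
      subst hb'
      nlinarith [mul_nonneg (mul_nonneg ha.le (by linarith : (0:ℝ) ≤ 1 - a))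
        (sq_nonneg (H.mulVec x₁ m - H.mulVec x₂ m))]
    have hP : ∑ n, |(a • x₁ + b • x₂) n| ^ p <
        a * ∑ n, |x₁ n| ^ p + b * ∑ n, |x₂ n| ^ p := by
      obtain ⟨n₀, hn₀⟩ := Function.ne_iff.1 hne
      rw [Finset.mul_sum, Finset.mul_sum, ← Finset.sum_add_distrib]
      apply Finset.sum_lt_sum
      · intro k _
        have h := (abs_rpow_strict hp).convexOn.2 (mem_univ (x₁ k)) (mem_univ (x₂ k))
          ha.le hb.le hab
        simpa using h
      · refine ⟨n₀, Finset.mem_univ _, ?_⟩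
        have h := (abs_rpow_strict hp).2 (mem_univ (x₁ n₀)) (mem_univ (x₂ n₀)) hn₀ ha hb hab
        simpa using h
    have h5 := mul_lt_mul_of_pos_left hP hlam
    simp only [smul_eq_mul, hF]
    nlinarith [h5, hQ]
  have huniq : ∀ x, (∀ x', F x ≤ F x') → x = s := fun x hx =>
    hstrict.eq_of_isMinOn (isMinOn_univ_iff.2 hx) (isMinOn_univ_iff.2 hs)
      (mem_univ x) (mem_univ s)
  refine ⟨s, hs, huniq, fun hsne => ?_⟩
  -- first-order condition
  set c : Fin M → ℝ := fun m => y m - H.mulVec s m with hc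
  have key : ∀ n, lam * (p * |s n| ^ (p - 1) * Real.sign (s n)) = ∑ m, 2 * c m * H m n := by
    intro n
    set e : Fin N → ℝ := Pi.single n (1:ℝ) with he
    set g : ℝ → ℝ := fun t => ∑ m, (c m - t * H m n) ^ 2 +
      lam * ∑ k, |s k + t * e k| ^ p with hg
    have hFg : ∀ t, F (s + t • e) = g t := by
      intro t
      rw [hF, hg]
      have hA : ∀ m, (y m - H.mulVec (s + t • e) m) ^ 2 = (c m - t * H m n) ^ 2 := by
        intro m
        have h1 : H.mulVec (s + t • e) m = H.mulVec s m + t * H m n := by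
          rw [he]
          simp [Matrix.mulVec_add, Matrix.mulVec_smul]
        rw [h1, hc]
        ring
      have hB : ∀ k, |(s + t • e) k| ^ p = |s k + t * e k| ^ p := fun k => by simp
      rw [Finset.sum_congr rfl fun m _ => hA m, Finset.sum_congr rfl fun k _ => hB k]
    have hmin0 : IsLocalMin g 0 := by
      have h0 : g 0 = F s := by
        rw [← hFg 0]
        congr 1
        simp
      refine Filter.Eventually.of_forall fun t => ?_
      rw [h0, ← hFg t]
      exact hs _
    have hderiv : HasDerivAt g
        ((∑ m, (2:ℝ) * (c m - 0 * H m n) ^ 1 * -(1 * H m n)) +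
          lam * ∑ k, p * |s k + 0 * e k| ^ (p - 1) *
            Real.sign (s k + 0 * e k) * (1 * e k)) 0 := by
      apply HasDerivAt.add
      · apply HasDerivAt.fun_sum
        intro m _
        exact (((hasDerivAt_id (0:ℝ)).mul_const (H m n)).const_sub (c m)).pow 2
      · apply HasDerivAt.const_mul
        apply HasDerivAt.fun_sum
        intro k _
        have inner : HasDerivAt (fun t : ℝ => s k + t * e k)
            (1 * e k) 0 :=
          ((hasDerivAt_id (0:ℝ)).mul_const _).const_add (s k)
        exact (lp_hasDerivAt_abs_rpow hp (s k + 0 * e k)).comp 0 inner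
    have hD := hmin0.hasDerivAt_eq_zero hderiv
    simp only [zero_mul, add_zero, sub_zero, pow_one, one_mul] at hD
    have hsum : ∑ k, p * |s k| ^ (p - 1) * Real.sign (s k) * e k =
        p * |s n| ^ (p - 1) * Real.sign (s n) := by
      rw [he]
      rw [Finset.sum_eq_single n]
      · simp
      · intro k _ hk
        rw [Pi.single_eq_of_ne hk]
        ring
      · intro h
        exact absurd (Finset.mem_univ n) h
    rw [hsum] at hD
    have hneg : ∑ m, 2 * c m * -(H m n) = -∑ m, 2 * c m * H m n := by
      rw [← Finset.sum_neg_distrib]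
      apply Finset.sum_congr rfl
      intro m _
      ring
    rw [hneg] at hD
    linarith
  set w : Fin N → ℝ := fun n => |s n| ^ (p - 1) * Real.sign (s n) with hw
  have hlp : lam * p ≠ 0 := by positivity
  set a0 : Fin M → ℝ := fun m => (2 / (lam * p)) * c m with ha0
  have hwa : ∀ n, H.transpose.mulVec a0 n = w n := by
    intro n
    have h1 : H.transpose.mulVec a0 n = ∑ m, H m n * a0 m := by
      simp [Matrix.mulVec, dotProduct, Matrix.transpose_apply]
    rw [h1]
    have h2 : ∑ m, H m n * a0 m = (1 / (lam * p)) * ∑ m, 2 * c m * H m n := by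
      rw [Finset.mul_sum]
      apply Finset.sum_congr rfl
      intro m _
      rw [ha0]
      field_simp
    rw [h2, ← key n, hw]
    field_simp
  have hsw : ∀ n, s n = |w n| ^ (q - 1) * Real.sign (w n) := fun n =>
    (dual_invert hq hpq1 (s n)).symm
  have hwne : ∃ k, w k ≠ 0 := by
    by_contra hcon
    push_neg at hcon
    apply hsne
    funext n
    rw [show (0 : Fin N → ℝ) n = 0 from rfl, hsw n, hcon n]
    simp [Real.zero_rpow hq1]
  obtain ⟨k₀, hk₀⟩ := hwne
  set S : ℝ := ∑ k, |w k| ^ q with hS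
  have hSpos : 0 < S := Finset.sum_pos' (fun k _ => Real.rpow_nonneg (abs_nonneg _) _)
    ⟨k₀, Finset.mem_univ _, Real.rpow_pos_of_pos (abs_pos.2 hk₀) _⟩
  set T : ℝ := (S ^ (1/q)) ^ (q - 2) with hT
  have hT0 : 0 < T := Real.rpow_pos_of_pos (Real.rpow_pos_of_pos hSpos _) _
  refine ⟨fun m => T * a0 m, fun n => ?_⟩
  have hva : ∀ n, H.transpose.mulVec (fun m => T * a0 m) n = T * w n := by
    intro n
    have h1 : (fun m => T * a0 m) = T • a0 := by funext m; simp
    rw [h1, Matrix.mulVec_smul]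
    simp [hwa n]
  have hsum : ∑ k, |H.transpose.mulVec (fun m => T * a0 m) k| ^ q = T ^ q * S := by
    rw [hS, Finset.mul_sum]
    apply Finset.sum_congr rfl
    intro k _
    rw [hva k, abs_mul, abs_of_pos hT0, Real.mul_rpow hT0.le (abs_nonneg _)]
  rw [hsum, hva n]
  have h1 : (T ^ q * S) ^ (1 / q) = T * S ^ (1 / q) := by
    rw [Real.mul_rpow (Real.rpow_nonneg hT0.le _) hSpos.le,
      ← Real.rpow_mul hT0.le, mul_one_div_cancel (by linarith : q ≠ 0), Real.rpow_one]
  have hden : ((T ^ q * S) ^ (1 / q)) ^ (q - 2) = T ^ (q - 1) := by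
    rw [h1, Real.mul_rpow hT0.le (Real.rpow_nonneg hSpos.le _), ← hT,
      show q - 1 = q - 2 + 1 by ring, Real.rpow_add_one (ne_of_gt hT0)]
  rw [hden]
  rcases eq_or_ne (w n) 0 with hwn | hwn
  · rw [hsw n, hwn]
    simp [Real.zero_rpow hq1]
  · have hsg : Real.sign (T * w n) = Real.sign (w n) := by
      rcases lt_or_gt_of_ne hwn with hneg | hpos
      · rw [Real.sign_of_neg hneg, Real.sign_of_neg (mul_neg_of_pos_of_neg hT0 hneg)]
      · rw [Real.sign_of_pos hpos, Real.sign_of_pos (mul_pos hT0 hpos)]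
    have habs : |T * w n| ^ (q - 1) = T ^ (q - 1) * |w n| ^ (q - 1) := by
      rw [abs_mul, abs_of_pos hT0, Real.mul_rpow hT0.le (abs_nonneg _)]
    rw [habs, hsg]
    have hTq : T ^ (q - 1) ≠ 0 := ne_of_gt (Real.rpow_pos_of_pos hT0 _)
    rw [hsw n]
    field_simp
end
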